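/- Let G be a graph with m ≥ 2sn edges on n vertices, and let F_1, ..., F_s be s edge-disjoint maximal spanning forests of G (F_i is a maximal spanning forest of G − (F_1 ∪ ... ∪ F_{i−1})). If an edge (v,w) of G lies in none of F_1, ..., F_s, then v and w are s-edge-connected in F_1 ∪ ... ∪ F_s, and hence in G. -/
import Mathlib


open SimpleGraph

/-- Nagamochi–Ibaraki sparsification certificate.  Let `G` be a graph with
`m ≥ 2sn` edges on `n` vertices and `F 1, ..., F s` edge-disjoint spanning
forests, each `F i` a maximal spanning forest of `G` minus the earlier
forests (so every edge of `G` outside the first `i` forests has its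
endpoints connected in `F i`).  If an edge `(v, w)` of `G` lies in none of
the forests, then `v` and `w` are `s`-edge-connected in `F 1 ∪ ... ∪ F s`:
no set of fewer than `s` edges separates them there (hence neither in `G`).
-/
theorem nagamochi_ibaraki_certificate {V : Type*} [Fintype V] [DecidableEq V]
    (G : SimpleGraph V) [DecidableRel G.Adj] (s : ℕ)
    (hm : 2 * s * Fintype.card V ≤ G.edgeFinset.card)
    (F : Fin s → SimpleGraph V)
    (hsub : ∀ i, F i ≤ G)
    (hforest : ∀ i, (F i).IsAcyclic)
    (hdisj : ∀ i j, i ≠ j → (F i).edgeSet ∩ (F j).edgeSet = ∅)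
    (hmax : ∀ (i : Fin s) (x y : V), G.Adj x y →
      (∀ j, j ≤ i → ¬ (F j).Adj x y) → (F i).Reachable x y)
    (v w : V) (hvw : G.Adj v w) (hout : ∀ i, ¬ (F i).Adj v w) :
    ∀ D : Finset (Sym2 V), D.card < s →
      (((⨆ i, F i).deleteEdges (D : Set (Sym2 V))).Reachable v w) := by
  intro D hD
  have hexists : ∃ i : Fin s, ∀ e ∈ D, e ∉ (F i).edgeSet := by
    by_contra h
    push_neg at h
    choose e he hmem using h
    have hinj : Function.Injective e := by
      intro i j hij
      by_contra hne
      have hmem' : e i ∈ (F i).edgeSet ∩ (F j).edgeSet := ⟨hmem i, hij ▸ hmem j⟩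
      rw [hdisj i j hne] at hmem'
      exact hmem'
    have hcard : s ≤ D.card := by
      have := Finset.card_le_card_of_injOn (s := Finset.univ) (t := D) e (fun i _ => he i) hinj.injOn
      simpa using this
    omega
  obtain ⟨i, hi⟩ := hexists
  have hreach : (F i).Reachable v w := hmax i v w hvw (fun j _ => hout j)
  refine hreach.mono ?_
  intro a b hab
  rw [SimpleGraph.deleteEdges_adj]
  exact ⟨le_iSup F i hab, fun hmem => hi _ (Finset.mem_coe.mp hmem) hab⟩
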